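/- In the setting of the two reduction orders of R·S·T, prove that C_p = K_p for all 1 ≤ p ≤ n (equivalently c_p = k_p componentwise), i.e., the top rows produced by the left-first reduction ((S·T = A·B, R·A = C·D) giving top row C) and by the right-first reduction ((R·S = G·H, H·T = I·J, G·I = K·L) giving top row K) agree. -/

import Mathlib

open Finset

/-- Partial sum `Φ_p = φ_1 + ⋯ + φ_p` of a multiplicity vector. -/
def PS (f : ℕ → ℕ) (p : ℕ) : ℕ := ∑ i ∈ Finset.Icc 1 p, f i

/-- Partial sums `X_p` of the bumped row in the vector insertion `W·Z = X·Y`: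
`X_0 = X_1 = 0`, `X_{p+1} = min(Z_p, X_p + w_{p+1})`. -/
def capX (W Z : ℕ → ℕ) : ℕ → ℕ
  | 0 => 0
  | p + 1 => if p = 0 then 0 else min (PS Z p) (capX W Z p + W (p + 1))

/-- Component `x_p = X_p - X_{p-1} = min(Z_{p-1} - X_{p-1}, w_p)` (with `x_1 = 0`). -/
def xcomp (W Z : ℕ → ℕ) (p : ℕ) : ℕ := capX W Z p - capX W Z (p - 1)

/-- Component `y_q = w_q + z_q - x_q`. -/
def ycomp (W Z : ℕ → ℕ) (q : ℕ) : ℕ := W q + Z q - xcomp W Z q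

/-- `A` from `S·T = A·B`. -/
def rowA (S T : ℕ → ℕ) : ℕ → ℕ := xcomp S T
/-- `B` from `S·T = A·B`. -/
def rowB (S T : ℕ → ℕ) : ℕ → ℕ := ycomp S T
/-- `C` from `R·A = C·D`. -/
def rowC (R S T : ℕ → ℕ) : ℕ → ℕ := xcomp R (rowA S T)
/-- `D` from `R·A = C·D`. -/
def rowD (R S T : ℕ → ℕ) : ℕ → ℕ := ycomp R (rowA S T)
/-- `E` from `D·B = E·F`. -/
def rowE (R S T : ℕ → ℕ) : ℕ → ℕ := xcomp (rowD R S T) (rowB S T)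
/-- `F` from `D·B = E·F`. -/
def rowF (R S T : ℕ → ℕ) : ℕ → ℕ := ycomp (rowD R S T) (rowB S T)
/-- `G` from `R·S = G·H`. -/
def rowG (R S : ℕ → ℕ) : ℕ → ℕ := xcomp R S
/-- `H` from `R·S = G·H`. -/
def rowH (R S : ℕ → ℕ) : ℕ → ℕ := ycomp R S
/-- `I` from `H·T = I·J`. -/
def rowI (R S T : ℕ → ℕ) : ℕ → ℕ := xcomp (rowH R S) T
/-- `J` from `H·T = I·J`. -/
def rowJ (R S T : ℕ → ℕ) : ℕ → ℕ := ycomp (rowH R S) T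
/-- `K` from `G·I = K·L`. -/
def rowK (R S T : ℕ → ℕ) : ℕ → ℕ := xcomp (rowG R S) (rowI R S T)
/-- `L` from `G·I = K·L`. -/
def rowL (R S T : ℕ → ℕ) : ℕ → ℕ := ycomp (rowG R S) (rowI R S T)

/-!
Vector insertion is min-plus: `X_q = min_{0 ≤ i ≤ q} (Z_{i-1} + W_q - W_i)`, with `Z_{-1}` read as
`Z_0 = 0`. Unfolding this twice, `C_p` is the minimum of `R_p` and of
`T_{j-1} - S_j + R_p + (D_j + D_p - m_i)` over `0 ≤ j < i ≤ p`, while `K_p` is the minimum of `G_p`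
and of `T_{j-1} - S_j + R_p + (D_{i-1} + D_i - m_i)` over the same pairs. Here `m_i = R_i - S_{i-1}`
(`jump`) and `D_q = R_q - G_q` (`excess`) is its running maximum. For fixed `j` the two inner minima
agree: if `D` is constant on `[j, p]` they agree term by term, and otherwise both equal `D_j`,
attained where `D` first rises above `D_j`, resp. where `m` reaches `D_p`. The boundary terms are
harmless: `K_p ≤ G_p ≤ R_p`, and each term `S_{i-1} + R_p - R_i` of `G_p` dominates a term of `C_p`.
-/

lemma PS_zero (f : ℕ → ℕ) : PS f 0 = 0 := by simp [PS]

lemma PS_succ (f : ℕ → ℕ) (q : ℕ) : PS f (q + 1) = PS f q + f (q + 1) :=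
  Finset.sum_Icc_succ_top (by omega) f

lemma PS_mono (f : ℕ → ℕ) : Monotone (PS f) :=
  monotone_nat_of_le_succ fun q => by rw [PS_succ]; omega

section Insertion

variable (W Z : ℕ → ℕ)

lemma capX_succ (q : ℕ) : capX W Z (q + 1) = min (PS Z q) (capX W Z q + W (q + 1)) := by
  cases q <;> simp [capX, PS_zero]

lemma capX_add_PS_le {i q : ℕ} (hiq : i ≤ q) :
    capX W Z q + PS W i ≤ PS Z (i - 1) + PS W q := by
  induction q, hiq using Nat.le_induction with
  | base =>
    cases i with
    | zero => simp [capX]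
    | succ i => simp only [capX_succ, Nat.add_sub_cancel]; omega
  | succ q _ ih =>
    rw [capX_succ, PS_succ]
    omega

lemma exists_capX_add_PS_eq (q : ℕ) :
    ∃ i ≤ q, capX W Z q + PS W i = PS Z (i - 1) + PS W q := by
  induction q with
  | zero => exact ⟨0, le_rfl, rfl⟩
  | succ q ih =>
    obtain ⟨i, hiq, hi⟩ := ih
    rw [capX_succ, PS_succ]
    rcases le_or_gt (PS Z q) (capX W Z q + W (q + 1)) with h | h
    · exact ⟨q + 1, le_rfl, by rw [min_eq_left h, PS_succ, Nat.add_sub_cancel]⟩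
    · exact ⟨i, by omega, by rw [min_eq_right h.le]; omega⟩

lemma capX_le_PS (q : ℕ) : capX W Z q ≤ PS W q := by
  simpa [PS_zero] using capX_add_PS_le W Z (Nat.zero_le q)

lemma capX_le_capX_succ (q : ℕ) : capX W Z q ≤ capX W Z (q + 1) := by
  have h := capX_add_PS_le W Z (le_refl q)
  have := PS_mono Z (Nat.sub_le q 1)
  rw [capX_succ]
  exact le_min (by omega) (Nat.le_add_right _ _)

lemma xcomp_le (q : ℕ) : xcomp W Z q ≤ W q := by
  cases q with
  | zero => simp [xcomp, capX]
  | succ q => rw [xcomp, capX_succ, Nat.add_sub_cancel]; omega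

lemma PS_xcomp : PS (xcomp W Z) = capX W Z := by
  funext q
  induction q with
  | zero => rw [PS_zero]; rfl
  | succ q ih =>
    rw [PS_succ, ih, xcomp, Nat.add_sub_cancel]
    have := capX_le_capX_succ W Z q
    omega

lemma PS_ycomp_add_capX (q : ℕ) : PS (ycomp W Z) q + capX W Z q = PS W q + PS Z q := by
  induction q with
  | zero => simp [PS_zero, capX]
  | succ q ih =>
    rw [← PS_xcomp W Z] at ih ⊢
    have := xcomp_le W Z (q + 1)
    simp only [PS_succ, ycomp]
    omega

end Insertion

def IsRunningMax {α : Type*} [LinearOrder α] (D m : ℕ → α) : Prop :=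
  ∀ i, D (i + 1) = max (D i) (m (i + 1))

namespace IsRunningMax

section LinearOrder

variable {α : Type*} [LinearOrder α] {D m : ℕ → α}

lemma monotone (hD : IsRunningMax D m) : Monotone D :=
  monotone_nat_of_le_succ fun i => (hD i).symm ▸ le_max_left _ _

lemma le_of_pos (hD : IsRunningMax D m) {i : ℕ} (hi : 0 < i) : m i ≤ D i := by
  obtain ⟨i, rfl⟩ := Nat.exists_eq_add_of_lt hi
  rw [zero_add, hD]
  exact le_max_right _ _

lemma exists_eq_of_lt (hD : IsRunningMax D m) {j p : ℕ} (hjp : j ≤ p) (hlt : D j < D p) :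
    ∃ q, j < q ∧ q ≤ p ∧ m q = D p := by
  induction p, hjp using Nat.le_induction with
  | base => exact absurd hlt (lt_irrefl _)
  | succ p hjp ih =>
    rw [hD p] at hlt ⊢
    rcases le_total (D p) (m (p + 1)) with h | h
    · exact ⟨p + 1, by omega, le_rfl, (max_eq_right h).symm⟩
    · rw [max_eq_left h] at hlt ⊢
      obtain ⟨q, hjq, hqp, hq⟩ := ih hlt
      exact ⟨q, hjq, by omega, hq⟩

lemma exists_first_jump (hD : IsRunningMax D m) {j p : ℕ} (hjp : j ≤ p) (hlt : D j < D p) :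
    ∃ q, j < q ∧ q ≤ p ∧ D (q - 1) = D j ∧ m q = D q := by
  induction p, hjp using Nat.le_induction with
  | base => exact absurd hlt (lt_irrefl _)
  | succ p hjp ih =>
    rcases (hD.monotone hjp).lt_or_eq with h | h
    · obtain ⟨q, hjq, hqp, hq⟩ := ih h
      exact ⟨q, hjq, by omega, hq⟩
    · refine ⟨p + 1, by omega, le_rfl, by rw [Nat.add_sub_cancel, h], ?_⟩
      have hjump : D p < m (p + 1) := by
        rw [hD p, ← h, lt_max_iff] at hlt
        rw [← h]
        exact hlt.resolve_left (lt_irrefl _)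
      rw [hD p, max_eq_right hjump.le]

end LinearOrder

variable {α : Type*} [AddCommGroup α] [LinearOrder α] [IsOrderedAddMonoid α] {D m : ℕ → α}

lemma exists_pred_add_sub_le (hD : IsRunningMax D m) {j i p : ℕ} (hji : j < i) (hip : i ≤ p) :
    ∃ i', j < i' ∧ i' ≤ p ∧ D (i' - 1) + D i' - m i' ≤ D j + D p - m i := by
  rcases (hD.monotone (hji.le.trans hip)).lt_or_eq with hlt | heq
  · obtain ⟨q, hjq, hqp, hprev, hq⟩ := hD.exists_first_jump (hji.le.trans hip) hlt
    refine ⟨q, hjq, hqp, ?_⟩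
    rw [hprev, hq, add_sub_cancel_right, add_sub_assoc]
    exact le_add_of_nonneg_right
      (sub_nonneg.2 ((hD.le_of_pos (by omega)).trans (hD.monotone hip)))
  · refine ⟨i, hji, hip, sub_le_sub_right (add_le_add ?_ ?_) _⟩
    · exact (hD.monotone (by omega : i - 1 ≤ p)).trans_eq heq.symm
    · exact hD.monotone hip

lemma exists_add_sub_le_pred (hD : IsRunningMax D m) {j i' p : ℕ} (hji : j < i') (hip : i' ≤ p) :
    ∃ i, j < i ∧ i ≤ p ∧ D j + D p - m i ≤ D (i' - 1) + D i' - m i' := by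
  rcases (hD.monotone (hji.le.trans hip)).lt_or_eq with hlt | heq
  · obtain ⟨q, hjq, hqp, hq⟩ := hD.exists_eq_of_lt (hji.le.trans hip) hlt
    refine ⟨q, hjq, hqp, ?_⟩
    rw [hq, add_sub_cancel_right, add_sub_assoc]
    exact le_add_of_le_of_nonneg (hD.monotone (by omega)) (sub_nonneg.2 (hD.le_of_pos (by omega)))
  · refine ⟨i', hji, hip, sub_le_sub_right (add_le_add ?_ ?_) _⟩
    · exact hD.monotone (by omega)
    · exact heq.symm.trans_le (hD.monotone hji.le)

end IsRunningMax

def excess (R S : ℕ → ℕ) (q : ℕ) : ℤ := PS R q - capX R S q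

def jump (R S : ℕ → ℕ) (q : ℕ) : ℤ := PS R q - PS S (q - 1)

lemma isRunningMax_excess (R S : ℕ → ℕ) : IsRunningMax (excess R S) (jump R S) := by
  intro q
  simp only [excess, jump, capX_succ, PS_succ, Nat.add_sub_cancel]
  omega

section ThreeRows

variable (R S T : ℕ → ℕ)

lemma capX_rowG_rowI_le (p : ℕ) : capX (rowG R S) (rowI R S T) p ≤ capX R (rowA S T) p := by
  simp only [rowA, rowG, rowI, rowH]
  obtain ⟨i, hip, hC⟩ := exists_capX_add_PS_eq R (xcomp S T) p
  rw [PS_xcomp] at hC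
  rcases Nat.eq_zero_or_pos i with rfl | hi
  · calc capX (xcomp R S) (xcomp (ycomp R S) T) p ≤ PS (xcomp R S) p := capX_le_PS _ _ p
      _ = capX R S p := by rw [PS_xcomp]
      _ ≤ PS R p := capX_le_PS R S p
      _ = capX R (xcomp S T) p := by simpa [PS_zero, capX] using hC.symm
  · obtain ⟨j, hji, hA⟩ := exists_capX_add_PS_eq S T (i - 1)
    obtain ⟨i', hji', hi'p, hD⟩ :=
      (isRunningMax_excess R S).exists_pred_add_sub_le (show j < i by omega) hip
    have hK := capX_add_PS_le (xcomp R S) (xcomp (ycomp R S) T) hi'p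
    have hI := capX_add_PS_le (ycomp R S) T (show j ≤ i' - 1 by omega)
    have hHj := PS_ycomp_add_capX R S j
    have hHi' := PS_ycomp_add_capX R S (i' - 1)
    simp only [PS_xcomp] at hK
    simp only [excess, jump] at hD
    omega

lemma capX_le_capX_rowG_rowI (p : ℕ) : capX R (rowA S T) p ≤ capX (rowG R S) (rowI R S T) p := by
  simp only [rowA, rowG, rowI, rowH]
  obtain ⟨i', hi'p, hK⟩ := exists_capX_add_PS_eq (xcomp R S) (xcomp (ycomp R S) T) p
  simp only [PS_xcomp] at hK
  rcases Nat.eq_zero_or_pos i' with rfl | hi'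
  · obtain ⟨i, hip, hG⟩ := exists_capX_add_PS_eq R S p
    have hC := capX_add_PS_le R (xcomp S T) hip
    have hA := capX_le_PS S T (i - 1)
    rw [PS_xcomp] at hC
    simp only [Nat.zero_sub, capX, add_zero, zero_add] at hK
    omega
  · obtain ⟨j, hji', hI⟩ := exists_capX_add_PS_eq (ycomp R S) T (i' - 1)
    obtain ⟨i, hji, hip, hD⟩ :=
      (isRunningMax_excess R S).exists_add_sub_le_pred (show j < i' by omega) hi'p
    have hC := capX_add_PS_le R (xcomp S T) hip
    have hA := capX_add_PS_le S T (show j ≤ i - 1 by omega)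
    have hHj := PS_ycomp_add_capX R S j
    have hHi' := PS_ycomp_add_capX R S (i' - 1)
    rw [PS_xcomp] at hC
    simp only [excess, jump] at hD
    omega

lemma capX_rowA_eq : capX R (rowA S T) = capX (rowG R S) (rowI R S T) :=
  funext fun p => (capX_le_capX_rowG_rowI R S T p).antisymm (capX_rowG_rowI_le R S T p)

lemma rowC_eq_rowK : rowC R S T = rowK R S T := by
  funext p
  rw [rowC, rowK, xcomp, xcomp, capX_rowA_eq]

end ThreeRows

/-- The top rows of the two reductions of `R·S·T` agree:
`C_p = K_p` (equivalently, componentwise `c_p = k_p`) for all `1 ≤ p ≤ n`. -/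
theorem C_eq_K (n : ℕ) (R S T : ℕ → ℕ) :
    ∀ p, 1 ≤ p → p ≤ n →
      PS (rowC R S T) p = PS (rowK R S T) p ∧
      rowC R S T p = rowK R S T p := by
  intro p _ _
  rw [rowC_eq_rowK]
  exact ⟨rfl, rfl⟩
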